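/- For a qubit channel with Bloch transformation w ↦ t + Tw, the expansion coefficient of the trace distance equals the smallest singular value of T: inf over distinct qubit states ρ,σ of ‖N(ρ)−N(σ)‖₁ / ‖ρ−σ‖₁ = σ_min(T). -/

import Mathlib

open Matrix
open scoped ComplexOrder

/-- The trace norm `‖M‖₁ = Tr √(MᴴM)`. -/
noncomputable def traceNorm {n : Type} [Fintype n] [DecidableEq n] (M : Matrix n n ℂ) : ℝ :=
  (((Matrix.posSemidef_conjTranspose_mul_self M).1.eigenvectorUnitary : Matrix n n ℂ) *
    diagonal (((↑) : ℝ → ℂ) ∘ (Real.sqrt ·) ∘ (Matrix.posSemidef_conjTranspose_mul_self M).1.eigenvalues) *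
    (star ((Matrix.posSemidef_conjTranspose_mul_self M).1.eigenvectorUnitary : Matrix n n ℂ))).trace.re

/-- The Euclidean norm on `ℝ³`. -/
noncomputable def euclNorm (v : Fin 3 → ℝ) : ℝ := Real.sqrt (∑ i, v i ^ 2)

/-- The qubit state with Bloch vector `w`: `½(I + w·σ⃗)`. -/
noncomputable def bloch (w : Fin 3 → ℝ) : Matrix (Fin 2) (Fin 2) ℂ :=
  (1 / 2 : ℂ) • ((1 : Matrix (Fin 2) (Fin 2) ℂ)
    + (w 0 : ℂ) • !![0, 1; 1, 0]
    + (w 1 : ℂ) • !![0, -Complex.I; Complex.I, 0]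
    + (w 2 : ℂ) • !![1, 0; 0, -1])

/-! The difference of two Bloch states is `½ (w - w')·σ⃗`, and the Pauli anticommutation relations
make its square `¼ ‖w - w'‖² I`; so its trace norm is `‖w - w'‖₂`. Both ratios therefore become
`‖T (w - w')‖₂ / ‖w - w'‖₂`, and every nonzero direction `v` is realised by the pair of states
`(v / ‖v‖₂, 0)`, so the two sets of ratios coincide. -/

lemma traceNorm_eq_sum_sqrt_eigenvalues {n : Type} [Fintype n] [DecidableEq n] (M : Matrix n n ℂ) :
    traceNorm M = ∑ i, √((posSemidef_conjTranspose_mul_self M).1.eigenvalues i) := by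
  rw [traceNorm, trace_mul_cycle, Unitary.coe_star_mul_self, one_mul]
  simp [trace]

lemma traceNorm_of_conjTranspose_mul_self_eq_smul_one {n : Type} [Fintype n] [DecidableEq n]
    {M : Matrix n n ℂ} {r : ℝ} (h : Mᴴ * M = (r : ℂ) • 1) :
    traceNorm M = Fintype.card n * √r := by
  have eigenvalues_eq : ∀ i, (posSemidef_conjTranspose_mul_self M).1.eigenvalues i = r := by
    intro i
    have : Nonempty n := ⟨i⟩
    have hspec : spectrum ℝ (Mᴴ * M) = {r} := by
      rw [h, Complex.coe_smul, ← Algebra.algebraMap_eq_smul_one, spectrum.scalar_eq]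
    simpa [hspec] using (posSemidef_conjTranspose_mul_self M).1.eigenvalues_mem_spectrum_real i
  simp [traceNorm_eq_sum_sqrt_eigenvalues, eigenvalues_eq]

lemma euclNorm_eq_norm (v : Fin 3 → ℝ) :
    euclNorm v = ‖(WithLp.toLp 2 v : EuclideanSpace ℝ (Fin 3))‖ := by
  simp [euclNorm, EuclideanSpace.norm_eq]

lemma euclNorm_nonneg (v : Fin 3 → ℝ) : 0 ≤ euclNorm v :=
  Real.sqrt_nonneg _

lemma euclNorm_sq (v : Fin 3 → ℝ) : euclNorm v ^ 2 = ∑ i, v i ^ 2 :=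
  Real.sq_sqrt (by positivity)

lemma euclNorm_smul (c : ℝ) (v : Fin 3 → ℝ) : euclNorm (c • v) = |c| * euclNorm v := by
  rw [euclNorm_eq_norm, euclNorm_eq_norm, WithLp.toLp_smul, norm_smul, Real.norm_eq_abs]

lemma euclNorm_pos {v : Fin 3 → ℝ} (hv : v ≠ 0) : 0 < euclNorm v := by
  rw [euclNorm_eq_norm, norm_pos_iff]
  simpa using hv

lemma bloch_sub_conjTranspose_mul_self (w w' : Fin 3 → ℝ) :
    (bloch w - bloch w')ᴴ * (bloch w - bloch w') = (((euclNorm (w - w') / 2) ^ 2 : ℝ) : ℂ) • 1 := by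
  rw [div_pow, euclNorm_sq, Fin.sum_univ_three]
  ext i j
  fin_cases i <;> fin_cases j <;>
    simp [bloch, mul_apply, Fin.sum_univ_two, map_ofNat] <;> ring_nf <;> simp [Complex.I_sq] <;> ring

lemma traceNorm_bloch_sub (w w' : Fin 3 → ℝ) :
    traceNorm (bloch w - bloch w') = euclNorm (w - w') := by
  rw [traceNorm_of_conjTranspose_mul_self_eq_smul_one (bloch_sub_conjTranspose_mul_self w w'),
    Real.sqrt_sq (div_nonneg (euclNorm_nonneg _) zero_le_two)]
  simp
  ring

lemma traceNorm_bloch_affine_sub (t : Fin 3 → ℝ) (T : Matrix (Fin 3) (Fin 3) ℝ)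
    (w w' : Fin 3 → ℝ) :
    traceNorm (bloch (t + T *ᵥ w) - bloch (t + T *ᵥ w')) = euclNorm (T *ᵥ (w - w')) := by
  rw [traceNorm_bloch_sub, add_sub_add_left_eq_sub, mulVec_sub]

lemma euclNorm_mulVec_smul_div_euclNorm_smul (T : Matrix (Fin 3) (Fin 3) ℝ) {c : ℝ} (hc : c ≠ 0)
    (v : Fin 3 → ℝ) :
    euclNorm (T *ᵥ (c • v)) / euclNorm (c • v) = euclNorm (T *ᵥ v) / euclNorm v := by
  rw [mulVec_smul, euclNorm_smul, euclNorm_smul, mul_div_mul_left _ _ (abs_ne_zero.2 hc)]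

/-- For a qubit channel acting on Bloch vectors as `w ↦ t + Tw`, the trace-distance
expansion coefficient equals the smallest singular value of `T`, i.e. the infimum of
`‖Tv‖₂/‖v‖₂` over nonzero `v`. -/
theorem stmt17 (t : Fin 3 → ℝ) (T : Matrix (Fin 3) (Fin 3) ℝ) :
    sInf {r : ℝ | ∃ w w' : Fin 3 → ℝ, euclNorm w ≤ 1 ∧ euclNorm w' ≤ 1 ∧ w ≠ w' ∧
        r = traceNorm (bloch (t + T.mulVec w) - bloch (t + T.mulVec w'))
            / traceNorm (bloch w - bloch w')}
      = sInf {r : ℝ | ∃ v : Fin 3 → ℝ, v ≠ 0 ∧ r = euclNorm (T.mulVec v) / euclNorm v} := by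
  congr 1
  ext r
  constructor
  · rintro ⟨w, w', -, -, hne, rfl⟩
    exact ⟨w - w', sub_ne_zero.2 hne, by rw [traceNorm_bloch_affine_sub, traceNorm_bloch_sub]⟩
  · rintro ⟨v, hv, rfl⟩
    have hv_pos := euclNorm_pos hv
    have unit : euclNorm ((euclNorm v)⁻¹ • v) = 1 := by
      rw [euclNorm_smul, abs_of_pos (inv_pos.2 hv_pos), inv_mul_cancel₀ hv_pos.ne']
    refine ⟨(euclNorm v)⁻¹ • v, 0, unit.le, by simp [euclNorm], smul_ne_zero (by positivity) hv, ?_⟩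
    rw [traceNorm_bloch_affine_sub, traceNorm_bloch_sub, sub_zero,
      euclNorm_mulVec_smul_div_euclNorm_smul T (by positivity)]
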